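/- Let F be a field, G = GL(3, F), B the upper triangular Borel, N the unipotent upper triangular subgroup, P_0 the mirabolic subgroup (matrices in GL(3) with bottom row (0,0,1)), B_0 = B ∩ P_0 (upper triangular matrices with lower-right entry 1), and w_1, w_2 the simple reflections. Then the set 𝔊 := P_0(F) ∪ {p^{-1} b w_2 u p : p ∈ P_0(F), b ∈ B_0(F), u ∈ N_2(F)} decomposes as a disjoint union P_0(F) ⊔ (B_0 w_2 N_2)^{B_0\P_0}, and every element γ ∈ 𝔊 \ P_0(F) can be written uniquely as γ = p^{-1} b w_2 u p with p ∈ B_0(F)\P_0(F), b ∈ B_0(F), u ∈ N_2(F). -/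

import Mathlib

/-!
Everything is read off the bottom row (index 2; indices are 0-based). Left multiplication by an
element of `P₀` fixes the bottom row, and the bottom row of `b w₂ u` is row 1 of `u`, namely
`(0, 1, x)` with `x = u 1 2`. Hence the bottom row of `p⁻¹ (b w₂ u) p` is `p 1 + x • p 2`; if it
were `(0, 0, 1)`, rows 1 and 2 of `p` would both vanish in columns 0 and 1, so `p` would be
singular. If `p⁻¹ (b w₂ u) p = p'⁻¹ (b' w₂ u') p'`, then `q = p' p⁻¹ ∈ P₀` satisfies
`q (b w₂ u) = (b' w₂ u') q`, and comparing bottom rows gives `q 1 0 = 0`, so `q ∈ B₀`. For `p = p'`,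
the bottom rows of `b w₂ u = b' w₂ u'` give `u = u'`, and then `b = b'`.
-/
open Matrix

variable {F : Type*} [Field F]

/-- The permutation matrix of `σ` (column convention). -/
def permM {n : ℕ} (F : Type*) [Field F] (σ : Equiv.Perm (Fin n)) :
    Matrix (Fin n) (Fin n) F :=
  Matrix.of fun i j => if σ j = i then 1 else 0

/-- `g` lies in the Borel subgroup `B` of upper triangular matrices. -/
def inB {n : ℕ} (g : GL (Fin n) F) : Prop :=
  ∀ i j : Fin n, j < i → (g : Matrix (Fin n) (Fin n) F) i j = 0

/-- `g` lies in the mirabolic subgroup `P₀` of `GL(3)`: bottom row `(0,0,1)`. -/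
def inP0 (g : GL (Fin 3) F) : Prop :=
  (g : Matrix (Fin 3) (Fin 3) F) 2 0 = 0 ∧
  (g : Matrix (Fin 3) (Fin 3) F) 2 1 = 0 ∧
  (g : Matrix (Fin 3) (Fin 3) F) 2 2 = 1

/-- `g` lies in `B₀ = B ∩ P₀`: upper triangular with lower-right entry `1`. -/
def inB0 (g : GL (Fin 3) F) : Prop :=
  inB g ∧ (g : Matrix (Fin 3) (Fin 3) F) 2 2 = 1

/-- `g` lies in the one-parameter root subgroup `N₂` of `GL(3)` (for the second simple
root): identity except possibly at the `(2,3)` entry (0-based `(1,2)`). -/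
def inN2 (g : GL (Fin 3) F) : Prop :=
  ∀ i j : Fin 3, ¬(i = 1 ∧ j = 2) →
    (g : Matrix (Fin 3) (Fin 3) F) i j = if i = j then 1 else 0

/-- The set `(B₀ w₂ N₂)^{B₀\P₀} = {p⁻¹ b w₂ u p : p ∈ P₀, b ∈ B₀, u ∈ N₂}`. -/
def conjSet (w₂ : GL (Fin 3) F) : Set (GL (Fin 3) F) :=
  {γ | ∃ p b u : GL (Fin 3) F, inP0 p ∧ inB0 b ∧ inN2 u ∧ γ = p⁻¹ * (b * w₂ * u) * p}

local notation "M₃" => Matrix (Fin 3) (Fin 3) F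

theorem row_mul_eq_of_row_eq_one {m n o R : Type*} [Fintype n] [DecidableEq n] [Semiring R]
    {A : Matrix m n R} {i : m} {k : n} (hA : A i = (1 : Matrix n n R) k) (C : Matrix n o R) :
    (A * C) i = C k := by
  rw [mul_apply_eq_vecMul, hA, ← mul_apply_eq_vecMul, Matrix.one_mul]

theorem permM_row {n : ℕ} (σ : Equiv.Perm (Fin n)) (i : Fin n) :
    permM F σ i = (1 : Matrix (Fin n) (Fin n) F) (σ.symm i) := by
  ext j
  simp only [permM, of_apply, one_apply, Equiv.symm_apply_eq]
  exact if_congr eq_comm rfl rfl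

theorem inP0_iff_row (g : GL (Fin 3) F) : inP0 g ↔ (g : M₃) 2 = (1 : M₃) 2 := by
  refine ⟨fun ⟨h0, h1, h2⟩ => ?_, fun h => ?_⟩
  · ext j
    fin_cases j <;> simp [h0, h1, h2, one_apply]
  · refine ⟨?_, ?_, ?_⟩ <;> simp [h]

theorem inP0.row_mul {p : GL (Fin 3) F} (hp : inP0 p) (C : M₃) : ((p : M₃) * C) 2 = C 2 :=
  row_mul_eq_of_row_eq_one ((inP0_iff_row p).1 hp) C

theorem inP0.mul {p q : GL (Fin 3) F} (hp : inP0 p) (hq : inP0 q) : inP0 (p * q) := by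
  rw [inP0_iff_row, Units.val_mul, hp.row_mul]
  exact (inP0_iff_row q).1 hq

theorem inP0.inv {p : GL (Fin 3) F} (hp : inP0 p) : inP0 p⁻¹ := by
  rw [inP0_iff_row, ← hp.row_mul ((p⁻¹ : GL (Fin 3) F) : M₃), ← Units.val_mul, mul_inv_cancel,
    Units.val_one]

theorem inB0.inP0 {b : GL (Fin 3) F} (hb : inB0 b) : inP0 b :=
  ⟨hb.1 2 0 (by decide), hb.1 2 1 (by decide), hb.2⟩

theorem inB0_of_inP0 {q : GL (Fin 3) F} (hq : inP0 q) (h10 : (q : M₃) 1 0 = 0) : inB0 q := by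
  refine ⟨fun i j hji => ?_, hq.2.2⟩
  fin_cases i <;> fin_cases j
  all_goals first | exact absurd hji (by decide) | exact h10 | exact hq.1 | exact hq.2.1

theorem inN2.row_one_vecMul {u : GL (Fin 3) F} (hu : inN2 u) (C : M₃) :
    (u : M₃) 1 ᵥ* C = C 1 + (u : M₃) 1 2 • C 2 := by
  rw [vecMul_eq_sum, Fin.sum_univ_three, hu 1 0 (by decide), hu 1 1 (by decide)]
  simp

theorem inN2.ext {u u' : GL (Fin 3) F} (hu : inN2 u) (hu' : inN2 u')
    (h : (u : M₃) 1 2 = (u' : M₃) 1 2) : u = u' := by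
  ext i j
  by_cases hij : i = 1 ∧ j = 2
  · obtain ⟨rfl, rfl⟩ := hij
    exact h
  · rw [hu i j hij, hu' i j hij]

section BruhatCell

variable {w₂ b u : GL (Fin 3) F}

theorem row_two_mul_w₂_mul (hw₂ : (w₂ : M₃) = permM F (Equiv.swap 1 2)) (hb : inB0 b) :
    ((b * w₂ * u : GL (Fin 3) F) : M₃) 2 = (u : M₃) 1 := by
  have hw₂_row : (w₂ : M₃) 2 = (1 : M₃) 1 := by rw [hw₂, permM_row]; rfl
  rw [mul_assoc, Units.val_mul, hb.inP0.row_mul, Units.val_mul,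
    row_mul_eq_of_row_eq_one hw₂_row]

theorem row_two_conj_mul_w₂_mul (hw₂ : (w₂ : M₃) = permM F (Equiv.swap 1 2)) {p : GL (Fin 3) F}
    (hp : inP0 p) (hb : inB0 b) (hu : inN2 u) :
    ((p⁻¹ * (b * w₂ * u) * p : GL (Fin 3) F) : M₃) 2
      = (p : M₃) 1 + (u : M₃) 1 2 • (p : M₃) 2 := by
  rw [mul_assoc, Units.val_mul, hp.inv.row_mul, Units.val_mul, mul_apply_eq_vecMul,
    row_two_mul_w₂_mul hw₂ hb, hu.row_one_vecMul]

theorem conj_mul_w₂_mul_not_inP0 (hw₂ : (w₂ : M₃) = permM F (Equiv.swap 1 2))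
    {p : GL (Fin 3) F} (hp : inP0 p) (hb : inB0 b) (hu : inN2 u) :
    ¬ inP0 (p⁻¹ * (b * w₂ * u) * p) := by
  intro hγ
  have hrow := (inP0_iff_row _).1 hγ
  rw [row_two_conj_mul_w₂_mul hw₂ hp hb hu] at hrow
  have hp10 : (p : M₃) 1 0 = 0 := by simpa [hp.1, eq_comm] using congrFun hrow 0
  have hp11 : (p : M₃) 1 1 = 0 := by simpa [hp.2.1, eq_comm] using congrFun hrow 1
  have hdet := (Matrix.isUnit_iff_isUnit_det _).1 p.isUnit
  rw [Matrix.det_fin_three, hp10, hp11, hp.1, hp.2.1] at hdet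
  simp at hdet

theorem inB0_of_mul_w₂_mul_eq {b' u' q : GL (Fin 3) F}
    (hw₂ : (w₂ : M₃) = permM F (Equiv.swap 1 2)) (hq : inP0 q) (hb : inB0 b) (hb' : inB0 b')
    (hu : inN2 u) (hu' : inN2 u') (h : q * (b * w₂ * u) = b' * w₂ * u' * q) : inB0 q := by
  have hrow : ((q * (b * w₂ * u) : GL (Fin 3) F) : M₃) 2
      = ((b' * w₂ * u' * q : GL (Fin 3) F) : M₃) 2 := by
    rw [h]
  rw [Units.val_mul, hq.row_mul, row_two_mul_w₂_mul hw₂ hb, Units.val_mul, mul_apply_eq_vecMul,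
    row_two_mul_w₂_mul hw₂ hb', hu'.row_one_vecMul, (inP0_iff_row q).1 hq] at hrow
  exact inB0_of_inP0 hq (by simpa [hu 1 0 (by decide), eq_comm] using congrFun hrow 0)

theorem eq_of_mul_w₂_mul_eq {b' u' : GL (Fin 3) F}
    (hw₂ : (w₂ : M₃) = permM F (Equiv.swap 1 2)) (hb : inB0 b) (hb' : inB0 b')
    (hu : inN2 u) (hu' : inN2 u') (h : b * w₂ * u = b' * w₂ * u') : b = b' ∧ u = u' := by
  have hrow := congrArg (fun g : GL (Fin 3) F => (g : M₃) 2 2) h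
  simp only [row_two_mul_w₂_mul hw₂ hb, row_two_mul_w₂_mul hw₂ hb'] at hrow
  obtain rfl := hu.ext hu' hrow
  exact ⟨mul_right_cancel (mul_right_cancel h), rfl⟩

end BruhatCell

/-- In `GL(3, F)`, the set `𝔊 = P₀ ∪ (B₀w₂N₂)^{B₀\P₀}` is a *disjoint*
union, and every `γ ∈ 𝔊 ∖ P₀` can be written *uniquely* as `γ = p⁻¹ b w₂ u p` with
`p ∈ B₀\P₀`, `b ∈ B₀`, `u ∈ N₂`: the coset `B₀p` is unique, and for a fixed
representative `p` the elements `b` and `u` are unique. -/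
theorem mirabolic_singular_decomposition_GL3 (w₂ : GL (Fin 3) F)
    (hw₂ : (w₂ : Matrix (Fin 3) (Fin 3) F) = permM F (Equiv.swap 1 2)) :
    (∀ γ : GL (Fin 3) F, γ ∈ conjSet w₂ → ¬ inP0 γ) ∧
    (∀ p p' b b' u u' : GL (Fin 3) F,
      inP0 p → inP0 p' → inB0 b → inB0 b' → inN2 u → inN2 u' →
      p⁻¹ * (b * w₂ * u) * p = p'⁻¹ * (b' * w₂ * u') * p' →
      (∃ c : GL (Fin 3) F, inB0 c ∧ p' = c * p) ∧
      (p = p' → b = b' ∧ u = u')) := by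
  refine ⟨?_, fun p p' b b' u u' hp hp' hb hb' hu hu' h => ⟨?_, ?_⟩⟩
  · rintro γ ⟨p, b, u, hp, hb, hu, rfl⟩
    exact conj_mul_w₂_mul_not_inP0 hw₂ hp hb hu
  · have hq : p' * p⁻¹ * (b * w₂ * u) = b' * w₂ * u' * (p' * p⁻¹) := by
      calc p' * p⁻¹ * (b * w₂ * u) = p' * (p⁻¹ * (b * w₂ * u) * p) * p⁻¹ := by group
        _ = b' * w₂ * u' * (p' * p⁻¹) := by rw [h]; group
    exact ⟨p' * p⁻¹, inB0_of_mul_w₂_mul_eq hw₂ (hp'.mul hp.inv) hb hb' hu hu' hq, by group⟩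
  · rintro rfl
    exact eq_of_mul_w₂_mul_eq hw₂ hb hb' hu hu' (mul_left_cancel (mul_right_cancel h))
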